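/- arXiv:2207.02930 — 2 statements merged into one kernel-verified Lean document; each statement's English description precedes it below -/
import Mathlib

section
/- If all n agents have identical preferences, the Rawlsian assignment assigns every agent every object with probability 1/n (the uniform bistochastic matrix). -/
open Finset

/-- An n×n matrix with nonnegative real entries whose rows and columns each sum to 1. -/
def Bistochastic {n : ℕ} (x : Fin n → Fin n → ℝ) : Prop :=
  (∀ i o, 0 ≤ x i o) ∧ (∀ i, ∑ o, x i o = 1) ∧ (∀ o, ∑ i, x i o = 1)

/-- `tailProb rank x i k` = probability that agent `i` receives an object ranked `k`-th
or worse (ranks are 0-indexed: rank 0 = most preferred). -/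
def tailProb {n : ℕ} (rank : Fin n → Fin n → Fin n) (x : Fin n → Fin n → ℝ)
    (i k : Fin n) : ℝ :=
  ∑ o ∈ Finset.univ.filter (fun o => k ≤ rank i o), x i o

/-- The values of `v` rearranged in non-increasing order. -/
noncomputable def sortedDesc {n : ℕ} (v : Fin n → ℝ) : Fin n → ℝ :=
  fun j => v (Tuple.sort (fun i => -v i) j)

/-- Block `t` of `Bvec rank x` is the non-increasing rearrangement of the tail
probabilities at threshold `n-1-t`; so blocks run from the worst rank down. -/
noncomputable def Bvec {n : ℕ} (rank : Fin n → Fin n → Fin n) (x : Fin n → Fin n → ℝ) :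
    Fin n → Fin n → ℝ :=
  fun t => sortedDesc (fun i => tailProb rank x i t.rev)

/-- Lexicographic strict order on doubly-indexed vectors (outer index first). -/
def BlockLexLt {α β : Type*} [LinearOrder α] [LinearOrder β] (u v : α → β → ℝ) : Prop :=
  ∃ t s, u t s < v t s ∧ ∀ t' s', (t' < t ∨ (t' = t ∧ s' < s)) → u t' s' = v t' s'

/-- `x` Rawlsian-dominates `y`. -/
def RDom {n : ℕ} (rank : Fin n → Fin n → Fin n) (x y : Fin n → Fin n → ℝ) : Prop :=
  BlockLexLt (Bvec rank x) (Bvec rank y)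

/-- A Rawlsian assignment: a bistochastic matrix not R-dominated by any other. -/
def Rawlsian {n : ℕ} (rank : Fin n → Fin n → Fin n) (x : Fin n → Fin n → ℝ) : Prop :=
  Bistochastic x ∧ ∀ y, Bistochastic y → ¬ RDom rank y x

/-!
With a common ranking, every agent's tail at threshold `k` is the same set `S` of objects, so
for any bistochastic `y` the `k`-th block of `B^y` sums, via the column sums, to `#S`. For the
uniform matrix that block is constant. A non-increasing block that is lexicographically below a
constant one has a strictly smaller sum, so no bistochastic `y` can R-dominate the uniform matrix.
-/

theorem bistochastic_uniform {n : ℕ} (hn : 0 < n) :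
    Bistochastic (fun (_ _ : Fin n) => (1 : ℝ) / n) := by
  have hn' : (n : ℝ) ≠ 0 := by positivity
  refine ⟨fun _ _ => by positivity, fun _ => ?_, fun _ => ?_⟩ <;> simp [hn']

theorem sum_sortedDesc {n : ℕ} (v : Fin n → ℝ) : ∑ j, sortedDesc v j = ∑ i, v i :=
  Equiv.sum_comp (Tuple.sort fun i => -v i) v

theorem antitone_sortedDesc {n : ℕ} (v : Fin n → ℝ) : Antitone (sortedDesc v) :=
  fun _ _ hjk => neg_le_neg_iff.mp (Tuple.monotone_sort (fun i => -v i) hjk)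

theorem Antitone.sum_lt_sum_const {ι : Type*} [Fintype ι] [LinearOrder ι] {v : ι → ℝ}
    (hv : Antitone v) {c : ℝ} {s : ι} (hs : v s < c) (hpre : ∀ j < s, v j = c) :
    ∑ j, v j < ∑ _j : ι, c := by
  refine Finset.sum_lt_sum (fun j _ => ?_) ⟨s, mem_univ s, hs⟩
  rcases lt_or_ge j s with hj | hj
  · exact (hpre j hj).le
  · exact (hv hj).trans hs.le

section IdenticalPreferences

variable {n : ℕ} {rank : Fin n → Fin n → Fin n}

theorem tailProb_eq_of_same (hsame : ∀ i j, rank i = rank j) (x : Fin n → Fin n → ℝ)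
    (i j k : Fin n) :
    tailProb rank x i k = ∑ o ∈ univ.filter (fun o => k ≤ rank j o), x i o := by
  rw [tailProb, hsame i j]

theorem sum_Bvec_of_same (hsame : ∀ i j, rank i = rank j) {y : Fin n → Fin n → ℝ}
    (hy : ∀ o, ∑ i, y i o = 1) (a t : Fin n) :
    ∑ s, Bvec rank y t s = #(univ.filter fun o => t.rev ≤ rank a o) := by
  simp only [Bvec, sum_sortedDesc, tailProb_eq_of_same hsame y _ a]
  rw [sum_comm]
  simp [hy]

theorem Bvec_const_of_same (hsame : ∀ i j, rank i = rank j) (c : ℝ) (a t s : Fin n) :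
    Bvec rank (fun _ _ => c) t s = #(univ.filter fun o => t.rev ≤ rank a o) * c := by
  simp [Bvec, sortedDesc, tailProb_eq_of_same hsame _ _ a]

end IdenticalPreferences

theorem rawlsian_identical_prefs_general {n : ℕ} (hn : 0 < n) (rank : Fin n → Fin n → Fin n)
    (hsame : ∀ i j, rank i = rank j) :
    Rawlsian rank (fun _ _ => (1 : ℝ) / n) := by
  have hu := bistochastic_uniform hn
  refine ⟨hu, fun y hy ⟨t, s, hlt, hpre⟩ => ?_⟩
  have hconst := Bvec_const_of_same hsame ((1 : ℝ) / n) t t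
  have hlt_sum : ∑ j, Bvec rank y t j < ∑ j, Bvec rank (fun _ _ => (1 : ℝ) / n) t j := by
    simp only [hconst]
    exact (antitone_sortedDesc _).sum_lt_sum_const (hconst s ▸ hlt)
      fun j hj => (hpre t j (Or.inr ⟨rfl, hj⟩)).trans (hconst j)
  rw [sum_Bvec_of_same hsame hy.2.2 t, sum_Bvec_of_same hsame hu.2.2 t] at hlt_sum
  exact lt_irrefl _ hlt_sum

/-- If all agents have identical preferences, the Rawlsian assignment is the uniform
bistochastic matrix. -/
theorem rawlsian_identical_prefs {n : ℕ} (hn : 0 < n) (rank : Fin n → Fin n → Fin n)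
    (hrank : ∀ i, Function.Bijective (rank i))
    (hsame : ∀ i j, rank i = rank j) :
    Rawlsian rank (fun _ _ => (1 : ℝ) / n) :=
  rawlsian_identical_prefs_general hn rank hsame
end

section
/- The Rawlsian rule satisfies lower invariance: if agent i swaps two consecutively ranked objects a and b (with a ranked just above b in ⪰_i) to obtain ⪰'_i, then in the Rawlsian assignments for (⪰_i, ⪰_{−i}) and (⪰'_i, ⪰_{−i}), agent i's assignment probabilities coincide on every object that she ranks strictly below b under ⪰_i. -/
/-!
Raising `b` above `a` changes agent `i0`'s tail sets only at thresholds up to the rank of `b`,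
so both profiles give the same blocks of the B-vector at the higher thresholds, which come first
in the lexicographic order; minimality then forces `x` and `y` to have equal sorted blocks there.
The midpoint of `x` and `y` is bistochastic, and the sum of the `k` largest entries is convex, so
wherever the (unsorted) tail vectors of `x` and `y` first differ, the midpoint has a
lexicographically smaller block, contradicting minimality of `x`. Hence the tail probabilities
above the rank of `b` agree, and they determine the entries below `b`.
-/

open Finset

open Function

section LexFirst

variable {α β γ : Type*} [LinearOrder α] [LinearOrder β] [Finite α] [Finite β]

theorem exists_lexFirst_ne {u v : α → β → γ} {t₀ : α} {s₀ : β} (h : u t₀ s₀ ≠ v t₀ s₀) :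
    ∃ t s, t ≤ t₀ ∧ u t s ≠ v t s ∧
      ∀ t' s', (t' < t ∨ (t' = t ∧ s' < s)) → u t' s' = v t' s' := by
  obtain ⟨p, hp, hmin⟩ := (wellFounded_lt (α := α ×ₗ β)).has_min
    {p | u (ofLex p).1 (ofLex p).2 ≠ v (ofLex p).1 (ofLex p).2} ⟨toLex (t₀, s₀), h⟩
  refine ⟨(ofLex p).1, (ofLex p).2, ?_, hp, fun t' s' hlt => ?_⟩
  · have hle : p ≤ toLex (t₀, s₀) := not_lt.mp (hmin _ h)
    rcases Prod.Lex.le_iff.mp hle with h' | ⟨h', -⟩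
    · exact h'.le
    · exact h'.le
  · by_contra hne
    exact hmin (toLex (t', s')) hne (Prod.Lex.lt_iff.mpr hlt)

end LexFirst

theorem Antitone.sum_le_sum_Iic {α : Type*} [LinearOrder α] [LocallyFiniteOrderBot α]
    [DecidableEq α] {g : α → ℝ} (hg : Antitone g) {T : Finset α} {s : α}
    (hT : T.card = (Iic s).card) : ∑ j ∈ T, g j ≤ ∑ j ∈ Iic s, g j := by
  have hout : ∑ j ∈ T \ Iic s, g j ≤ (T \ Iic s).card • g s :=
    sum_le_card_nsmul _ _ _ fun j hj =>
      hg (le_of_lt (not_le.mp fun h => (mem_sdiff.mp hj).2 (mem_Iic.mpr h)))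
  have hin : (Iic s \ T).card • g s ≤ ∑ j ∈ Iic s \ T, g j :=
    card_nsmul_le_sum _ _ _ fun j hj => hg (mem_Iic.mp (mem_sdiff.mp hj).1)
  rw [card_sdiff_comm hT] at hout
  have hT' := sum_inter_add_sum_sdiff T (Iic s) g
  have hI := sum_inter_add_sum_sdiff (Iic s) T g
  rw [inter_comm] at hI
  linarith

section Sorting

variable {n : ℕ}

theorem sortedDesc_antitone (v : Fin n → ℝ) : Antitone (sortedDesc v) := fun _ _ h =>
  neg_le_neg_iff.mp (Tuple.monotone_sort (fun i => -v i) h)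

theorem sum_comp_sortedDesc (v : Fin n → ℝ) (f : ℝ → ℝ) :
    ∑ j, f (sortedDesc v j) = ∑ i, f (v i) :=
  Equiv.sum_comp (Tuple.sort fun i => -v i) (fun i => f (v i))

theorem sum_le_sum_Iic_sortedDesc (v : Fin n → ℝ) {S : Finset (Fin n)} {s : Fin n}
    (hS : S.card = (Iic s).card) : ∑ i ∈ S, v i ≤ ∑ j ∈ Iic s, sortedDesc v j := by
  set σ := Tuple.sort fun i => -v i
  have hsum : ∑ i ∈ S, v i = ∑ j ∈ S.map σ.symm.toEmbedding, sortedDesc v j := by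
    simp [sortedDesc, σ]
  rw [hsum]
  exact (sortedDesc_antitone v).sum_le_sum_Iic (by rwa [card_map])

theorem sum_Iic_sortedDesc_eq (v : Fin n → ℝ) (s : Fin n) :
    ∑ j ∈ Iic s, sortedDesc v j =
      ∑ i ∈ (Iic s).map (Tuple.sort fun i => -v i).toEmbedding, v i := by
  simp [sortedDesc]

variable {u v : Fin n → ℝ}

/-- Via convexity of the sum of the `s + 1` largest entries. -/
theorem sortedDesc_midpoint_le (huv : sortedDesc u = sortedDesc v) {s : Fin n}
    (hpre : ∀ s' < s, sortedDesc (fun i => (u i + v i) / 2) s' = sortedDesc u s') :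
    sortedDesc (fun i => (u i + v i) / 2) s ≤ sortedDesc u s := by
  set w := fun i => (u i + v i) / 2
  set S := (Iic s).map (Tuple.sort fun i => -w i).toEmbedding
  have hS : S.card = (Iic s).card := card_map _
  have hconv : ∑ j ∈ Iic s, sortedDesc w j ≤ ∑ j ∈ Iic s, sortedDesc u j :=
    calc ∑ j ∈ Iic s, sortedDesc w j = (∑ i ∈ S, u i + ∑ i ∈ S, v i) / 2 := by
          rw [sum_Iic_sortedDesc_eq, ← sum_add_distrib, sum_div]
      _ ≤ (∑ j ∈ Iic s, sortedDesc u j + ∑ j ∈ Iic s, sortedDesc v j) / 2 := by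
          gcongr
          · exact sum_le_sum_Iic_sortedDesc u hS
          · exact sum_le_sum_Iic_sortedDesc v hS
      _ = ∑ j ∈ Iic s, sortedDesc u j := by rw [← huv]; ring
  rw [← Iio_insert, sum_insert notMem_Iio_self, sum_insert notMem_Iio_self,
    sum_congr rfl fun j hj => hpre j (mem_Iio.mp hj)] at hconv
  linarith

/-- Sorting preserves the sum of squares, and `‖u - v‖² = 2‖u‖² + 2‖v‖² - 4‖(u + v)/2‖²`. -/
theorem eq_of_sortedDesc_midpoint_eq (huv : sortedDesc u = sortedDesc v)
    (hw : sortedDesc (fun i => (u i + v i) / 2) = sortedDesc u) : u = v := by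
  have hsq : ∀ {p q : Fin n → ℝ}, sortedDesc p = sortedDesc q → ∑ i, p i ^ 2 = ∑ i, q i ^ 2 :=
    fun {p q} h => by
      rw [← sum_comp_sortedDesc p (· ^ 2), ← sum_comp_sortedDesc q (· ^ 2), h]
  have hzero : ∑ i, (u i - v i) ^ 2 = 0 := by
    have hpar : ∑ i, (u i - v i) ^ 2
        = 2 * ∑ i, u i ^ 2 + 2 * ∑ i, v i ^ 2 - 4 * ∑ i, ((u i + v i) / 2) ^ 2 := by
      simp only [mul_sum, ← sum_add_distrib, ← sum_sub_distrib]
      exact sum_congr rfl fun i _ => by ring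
    rw [hpar, hsq hw, ← hsq huv]
    ring
  funext i
  have := (sum_eq_zero_iff_of_nonneg fun i _ => sq_nonneg (u i - v i)).mp hzero i (mem_univ i)
  linarith [pow_eq_zero_iff (n := 2) two_ne_zero |>.mp this]

theorem exists_sortedDesc_midpoint_lt (huv : sortedDesc u = sortedDesc v) (hne : u ≠ v) :
    ∃ s, sortedDesc (fun i => (u i + v i) / 2) s < sortedDesc u s ∧
      ∀ s' < s, sortedDesc (fun i => (u i + v i) / 2) s' = sortedDesc u s' := by
  have hw : ∃ s, sortedDesc (fun i => (u i + v i) / 2) s ≠ sortedDesc u s := by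
    by_contra! h
    exact hne (eq_of_sortedDesc_midpoint_eq huv (funext h))
  obtain ⟨s, hs, hmin⟩ := wellFounded_lt.has_min _ hw
  have hpre : ∀ s' < s, sortedDesc (fun i => (u i + v i) / 2) s' = sortedDesc u s' :=
    fun s' hs' => by_contra fun h => hmin s' h hs'
  exact ⟨s, lt_of_le_of_ne (sortedDesc_midpoint_le huv hpre) hs, hpre⟩

end Sorting

section Rawlsian

variable {n : ℕ} {rank rank' : Fin n → Fin n → Fin n} {x y : Fin n → Fin n → ℝ}

theorem Bistochastic.midpoint (hx : Bistochastic x) (hy : Bistochastic y) :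
    Bistochastic fun i o => (x i o + y i o) / 2 := by
  obtain ⟨hx0, hxr, hxc⟩ := hx
  obtain ⟨hy0, hyr, hyc⟩ := hy
  refine ⟨fun i o => by linarith [hx0 i o, hy0 i o], fun i => ?_, fun o => ?_⟩
  · rw [← sum_div, sum_add_distrib, hxr, hyr]; norm_num
  · rw [← sum_div, sum_add_distrib, hxc, hyc]; norm_num

theorem bvec_midpoint (t : Fin n) :
    Bvec rank (fun i o => (x i o + y i o) / 2) t =
      sortedDesc fun i => (tailProb rank x i t.rev + tailProb rank y i t.rev) / 2 := by
  simp only [Bvec, tailProb, ← sum_add_distrib, sum_div]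

theorem rank_eq_above_of_swap {i0 a b : Fin n} (hab : rank i0 a ≤ rank i0 b)
    (hswapa : rank' i0 a = rank i0 b) (hswapb : rank' i0 b = rank i0 a)
    (hother : ∀ o, o ≠ a → o ≠ b → rank' i0 o = rank i0 o)
    (hagents : ∀ j, j ≠ i0 → rank' j = rank j) :
    ∀ i o, (rank i0 b < rank i o ∨ rank i0 b < rank' i o) → rank' i o = rank i o := by
  intro i o ho
  by_cases hi : i = i0
  · subst hi
    by_cases hoa : o = a
    · subst hoa
      rw [hswapa] at ho
      exact absurd ho (by simp [hab])
    by_cases hob : o = b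
    · subst hob
      rw [hswapb] at ho
      exact absurd ho (by simp [hab])
    exact hother o hoa hob
  · rw [hagents i hi]

theorem bvec_eq_of_rank_eq_above {K t : Fin n}
    (hrank : ∀ i o, (K < rank i o ∨ K < rank' i o) → rank' i o = rank i o) (ht : K < t.rev)
    (z : Fin n → Fin n → ℝ) : Bvec rank' z t = Bvec rank z t := by
  have hfilter : ∀ i, univ.filter (fun o => t.rev ≤ rank' i o) =
      univ.filter (fun o => t.rev ≤ rank i o) := fun i => by
    ext o
    simp only [mem_filter, mem_univ, true_and]
    constructor
    · intro h; rwa [← hrank i o (Or.inr (ht.trans_le h))]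
    · intro h; rwa [hrank i o (Or.inl (ht.trans_le h))]
  simp only [Bvec, tailProb, hfilter]

theorem Rawlsian.bvec_le_of_eqOn_lt {T : Fin n}
    (hagree : ∀ z, ∀ t < T, Bvec rank z t = Bvec rank' z t) (hx : Bistochastic x)
    (hy : Rawlsian rank' y) {t s : Fin n} (ht : t < T)
    (hpre : ∀ t' s', (t' < t ∨ (t' = t ∧ s' < s)) → Bvec rank x t' s' = Bvec rank' y t' s') :
    Bvec rank' y t s ≤ Bvec rank x t s := by
  by_contra! hlt
  refine hy.2 x hx ⟨t, s, by rwa [← hagree x t ht], fun t' s' h' => ?_⟩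
  have ht' : t' < T := (h'.elim le_of_lt fun h => h.1.le).trans_lt ht
  rw [← hagree x t' ht']
  exact hpre t' s' h'

theorem Rawlsian.bvec_eq_of_eqOn_lt {T : Fin n}
    (hagree : ∀ z, ∀ t < T, Bvec rank z t = Bvec rank' z t) (hx : Rawlsian rank x)
    (hy : Rawlsian rank' y) : ∀ t < T, Bvec rank x t = Bvec rank' y t := by
  by_contra! h
  obtain ⟨t₀, ht₀, hne⟩ := h
  obtain ⟨s₀, hs₀⟩ := Function.ne_iff.mp hne
  obtain ⟨t, s, htt₀, hts, hpre⟩ := exists_lexFirst_ne hs₀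
  have ht := htt₀.trans_lt ht₀
  exact hts (le_antisymm
    (hx.bvec_le_of_eqOn_lt (fun z t ht => (hagree z t ht).symm) hy.1 ht
      fun t' s' h => (hpre t' s' h).symm)
    (hy.bvec_le_of_eqOn_lt hagree hx.1 ht hpre))

theorem Rawlsian.tailProb_eq_of_bvec_eq {T : Fin n} (hx : Rawlsian rank x) (hy : Bistochastic y)
    (hxy : ∀ t < T, Bvec rank x t = Bvec rank y t) :
    ∀ t < T, ∀ i, tailProb rank x i t.rev = tailProb rank y i t.rev := by
  intro t
  induction t using WellFoundedLT.induction with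
  | _ t ih =>
  intro ht
  by_contra hne
  obtain ⟨s, hlt, hpre⟩ := exists_sortedDesc_midpoint_lt (hxy t ht) fun h => hne (congrFun h)
  refine hx.2 _ (hx.1.midpoint hy) ⟨t, s, by rw [bvec_midpoint]; exact hlt, ?_⟩
  rintro t' s' (h | ⟨rfl, h⟩)
  · simp only [bvec_midpoint, ← ih t' h (h.trans ht), add_self_div_two]
    rfl
  · rw [bvec_midpoint]
    exact hpre s' h

theorem eq_of_tailProb_eq {i K : Fin n} (hinj : Injective (rank i))
    (h : ∀ k, K < k → tailProb rank x i k = tailProb rank y i k) {o : Fin n}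
    (ho : K < rank i o) : x i o = y i o := by
  have hsplit : ∀ z : Fin n → Fin n → ℝ, tailProb rank z i (rank i o) =
      z i o + ∑ o' ∈ univ.filter (fun o' => rank i o < rank i o'), z i o' := fun z => by
    rw [tailProb, ← sum_insert (by simp)]
    congr 1
    ext o'
    simp [le_iff_eq_or_lt, hinj.eq_iff, eq_comm]
  have hstrict : ∑ o' ∈ univ.filter (fun o' => rank i o < rank i o'), x i o' =
      ∑ o' ∈ univ.filter (fun o' => rank i o < rank i o'), y i o' := by
    by_cases hlast : (rank i o : ℕ) + 1 < n
    · set k : Fin n := ⟨_, hlast⟩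
      have hk : univ.filter (fun o' => rank i o < rank i o') =
          univ.filter (fun o' => k ≤ rank i o') := by
        ext o'
        simp only [mem_filter, mem_univ, true_and, Fin.lt_def, Fin.le_def, k]
        omega
      rw [hk]
      exact h k (ho.trans (Fin.lt_def.mpr (Nat.lt_succ_self _)))
    · have hempty : univ.filter (fun o' => rank i o < rank i o') = ∅ :=
        filter_eq_empty_iff.mpr fun o' _ => by
          rw [Fin.lt_def]
          omega
      rw [hempty, sum_empty, sum_empty]
  linarith [hsplit x, hsplit y, h _ ho]

end Rawlsian

theorem rawlsian_lower_invariant_general {n : ℕ} (rank rank' : Fin n → Fin n → Fin n)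
    (hrank : ∀ i, Function.Bijective (rank i))
    (i0 : Fin n) (a b : Fin n)
    (hcons : (rank i0 b : ℕ) = (rank i0 a : ℕ) + 1)
    (hswapa : rank' i0 a = rank i0 b) (hswapb : rank' i0 b = rank i0 a)
    (hother : ∀ o, o ≠ a → o ≠ b → rank' i0 o = rank i0 o)
    (hagents : ∀ j, j ≠ i0 → rank' j = rank j)
    (x y : Fin n → Fin n → ℝ)
    (hx : Rawlsian rank x) (hy : Rawlsian rank' y) :
    ∀ o, rank i0 b < rank i0 o → x i0 o = y i0 o := by
  have hab : rank i0 a ≤ rank i0 b := Fin.le_def.mpr (by omega)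
  have hrank_above := rank_eq_above_of_swap hab hswapa hswapb hother hagents
  have hagree : ∀ z, ∀ t < (rank i0 b).rev, Bvec rank z t = Bvec rank' z t := fun z t ht =>
    (bvec_eq_of_rank_eq_above hrank_above (Fin.lt_rev_iff.mp ht) z).symm
  have hxy : ∀ t < (rank i0 b).rev, Bvec rank x t = Bvec rank y t := fun t ht =>
    (hx.bvec_eq_of_eqOn_lt hagree hy t ht).trans (hagree y t ht).symm
  have htail := hx.tailProb_eq_of_bvec_eq hy.1 hxy
  intro o ho
  refine eq_of_tailProb_eq (hrank i0).1 (fun k hk => ?_) ho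
  simpa using htail k.rev (Fin.rev_lt_rev.mpr hk) i0

/-- Lower invariance of the Rawlsian rule: if agent `i0` swaps two consecutively ranked
objects `a` (just above) and `b`, her Rawlsian assignment probabilities are unchanged on
every object she ranks strictly below `b`. -/
theorem rawlsian_lower_invariant {n : ℕ} (rank rank' : Fin n → Fin n → Fin n)
    (hrank : ∀ i, Function.Bijective (rank i))
    (hrank' : ∀ i, Function.Bijective (rank' i))
    (i0 : Fin n) (a b : Fin n)
    (hcons : (rank i0 b : ℕ) = (rank i0 a : ℕ) + 1)
    (hswapa : rank' i0 a = rank i0 b) (hswapb : rank' i0 b = rank i0 a)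
    (hother : ∀ o, o ≠ a → o ≠ b → rank' i0 o = rank i0 o)
    (hagents : ∀ j, j ≠ i0 → rank' j = rank j)
    (x y : Fin n → Fin n → ℝ)
    (hx : Rawlsian rank x) (hy : Rawlsian rank' y) :
    ∀ o, rank i0 b < rank i0 o → x i0 o = y i0 o :=
  rawlsian_lower_invariant_general rank rank' hrank i0 a b hcons hswapa hswapb hother hagents x y hx
    hy
end
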